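/- arXiv:2505.03433 — 11 statements merged into one kernel-verified Lean document; each statement's English description precedes it below -/
import Mathlib

section
/- For every w : I → ℝ and every j ∈ I, the deformed mutation value F_r w j — defined for real r > 0 by F_r w j = w j + (v j : ℝ) * r * Real.log (1 + Real.exp (w i / r)) if j ≠ i and v j ≥ 0, F_r w j = w j + (v j : ℝ) * r * Real.log (1 + Real.exp (-(w i) / r)) if j ≠ i and v j < 0, and F_r w i = -(w i) — tends to T w j as r tends to 0 within (0,∞) (i.e. along the filter nhdsWithin 0 (Set.Ioi 0)). -/
open Filter Topology

variable {I : Type*} [Fintype I] [DecidableEq I]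

/-- The tropical mutation at `i` with exchange entries `v`. -/
noncomputable def tropMut (i : I) (v : I → ℤ) (w : I → ℝ) : I → ℝ := fun j =>
  if j = i then -(w i)
  else if 0 ≤ v j then w j + (v j : ℝ) * max 0 (w i)
  else w j + (v j : ℝ) * max 0 (-(w i))

/-- The `r`-deformed mutation at `i`. -/
noncomputable def defMut (i : I) (v : I → ℤ) (r : ℝ) (w : I → ℝ) : I → ℝ := fun j =>
  if j = i then -(w i)
  else if 0 ≤ v j then w j + (v j : ℝ) * r * Real.log (1 + Real.exp (w i / r))
  else w j + (v j : ℝ) * r * Real.log (1 + Real.exp (-(w i) / r))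

private lemma aux_tendsto_zero (a : ℝ) (ha : a ≤ 0) :
    Tendsto (fun r : ℝ => r * Real.log (1 + Real.exp (a / r)))
      (nhdsWithin 0 (Set.Ioi 0)) (nhds 0) := by
  have h0 : Tendsto (fun r : ℝ => r * Real.log 2) (nhdsWithin 0 (Set.Ioi 0)) (nhds 0) := by
    have h : Tendsto (fun r : ℝ => r * Real.log 2) (nhds 0) (nhds (0 * Real.log 2)) :=
      (continuous_id.mul continuous_const).tendsto 0
    rw [zero_mul] at h
    exact h.mono_left nhdsWithin_le_nhds
  refine squeeze_zero_norm' ?_ h0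
  filter_upwards [self_mem_nhdsWithin] with r (hr : 0 < r)
  have h1 : (0:ℝ) ≤ Real.log (1 + Real.exp (a / r)) := by
    apply Real.log_nonneg
    nlinarith [Real.exp_pos (a / r)]
  have h2 : Real.log (1 + Real.exp (a / r)) ≤ Real.log 2 := by
    apply Real.log_le_log (by positivity)
    have : Real.exp (a / r) ≤ 1 := by
      rw [Real.exp_le_one_iff]
      exact div_nonpos_of_nonpos_of_nonneg ha hr.le
    linarith
  rw [Real.norm_eq_abs, abs_of_nonneg (by positivity)]
  exact mul_le_mul_of_nonneg_left h2 hr.le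

private lemma key (a : ℝ) :
    Tendsto (fun r : ℝ => r * Real.log (1 + Real.exp (a / r)))
      (nhdsWithin 0 (Set.Ioi 0)) (nhds (max 0 a)) := by
  have heq : ∀ r ∈ Set.Ioi (0:ℝ),
      r * Real.log (1 + Real.exp (a / r))
        = max 0 a + r * Real.log (1 + Real.exp (-|a| / r)) := by
    intro r (hr : 0 < r)
    rcases le_or_gt a 0 with h | h
    · rw [max_eq_left h, abs_of_nonpos h, neg_neg, zero_add]
    · rw [max_eq_right h.le, abs_of_pos h]
      have : (1 : ℝ) + Real.exp (a / r)
          = Real.exp (a / r) * (1 + Real.exp (-a / r)) := by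
        rw [mul_add, mul_one, ← Real.exp_add]
        ring_nf
        rw [Real.exp_zero, add_comm]
      rw [this, Real.log_mul (Real.exp_pos _).ne' (by positivity), Real.log_exp]
      field_simp
  have h2 := (aux_tendsto_zero (-|a|) (neg_nonpos_of_nonneg (abs_nonneg a))).const_add (max 0 a)
  rw [add_zero] at h2
  exact Tendsto.congr' (eventuallyEq_of_mem self_mem_nhdsWithin fun r hr => (heq r hr).symm) h2

/-- The deformed mutation tends to the tropical mutation as `r → 0⁺`. -/
theorem defMut_tendsto_tropMut (i : I) (v : I → ℤ) (hvi : v i = 0)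
    (w : I → ℝ) (j : I) :
    Tendsto (fun r : ℝ => defMut i v r w j) (nhdsWithin 0 (Set.Ioi 0))
      (nhds (tropMut i v w j)) := by
  unfold defMut tropMut
  by_cases hj : j = i
  · simp [hj]
  · simp only [hj, if_false]
    by_cases hv : 0 ≤ v j
    · simp only [hv, if_true]
      have := ((key (w i)).const_mul ((v j : ℝ))).const_add (w j)
      convert this using 2 with r
      · ring
    · simp only [hv, if_false]
      have := ((key (-(w i))).const_mul ((v j : ℝ))).const_add (w j)
      convert this using 2 with r
      · ring
end

section
/- Let T' be the tropical mutation at i associated to -v (i.e. with v replaced by j ↦ -(v j)). Then T' (T w) = w and T (T' w) = w for every w : I → ℝ; in particular T is a bijection of I → ℝ, and since T is continuous it is a homeomorphism of I → ℝ. -/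
variable {I : Type*} [Fintype I] [DecidableEq I]

lemma tropMut_key (i : I) (v : I → ℤ) (w : I → ℝ) :
    tropMut i (fun j => -(v j)) (tropMut i v w) = w := by
  funext j
  by_cases hj : j = i
  · simp [tropMut, hj]
  · have hTi : tropMut i v w i = -(w i) := by simp [tropMut]
    have hTj : tropMut i v w j =
        if 0 ≤ v j then w j + (v j : ℝ) * max 0 (w i)
        else w j + (v j : ℝ) * max 0 (-(w i)) := by simp [tropMut, hj]
    simp only [tropMut, hj, if_false, hTi, neg_neg]
    by_cases h1 : (0:ℤ) ≤ -(v j) <;> by_cases h2 : (0:ℤ) ≤ v j <;>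
      simp only [h1, h2, if_true, if_false, hTj] <;> push_cast <;> ring_nf
    · have : v j = 0 := by omega
      simp [this]
    · omega

lemma tropMut_continuous (i : I) (v : I → ℤ) : Continuous (tropMut i v) := by
  apply continuous_pi
  intro j
  unfold tropMut
  by_cases hj : j = i
  · simp only [hj, if_true]; fun_prop
  · by_cases h2 : (0:ℤ) ≤ v j <;> simp only [hj, h2, if_true, if_false] <;> fun_prop

/-- The tropical mutations at `i` for `v` and `-v` are mutually inverse; in
particular the tropical mutation is a bijection, and being continuous it is
a homeomorphism of `I → ℝ`. -/
theorem tropMut_inverse_bijective_homeomorph (i : I) (v : I → ℤ) (hvi : v i = 0) :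
    (∀ w : I → ℝ, tropMut i (fun j => -(v j)) (tropMut i v w) = w) ∧
    (∀ w : I → ℝ, tropMut i v (tropMut i (fun j => -(v j)) w) = w) ∧
    Function.Bijective (tropMut i v) ∧
    Continuous (tropMut i v) ∧
    ∃ h : (I → ℝ) ≃ₜ (I → ℝ), ⇑h = tropMut i v := by
  have h1 : ∀ w, tropMut i (fun j => -(v j)) (tropMut i v w) = w := tropMut_key i v
  have h2 : ∀ w, tropMut i v (tropMut i (fun j => -(v j)) w) = w := by
    intro w
    have := tropMut_key i (fun j => -(v j)) w
    simpa using this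
  have hbij : Function.Bijective (tropMut i v) := by
    refine Function.bijective_iff_has_inverse.mpr ⟨tropMut i (fun j => -(v j)), h1, h2⟩
  refine ⟨h1, h2, hbij, tropMut_continuous i v, ?_⟩
  exact ⟨{ toFun := tropMut i v, invFun := tropMut i (fun j => -(v j)),
           left_inv := h1, right_inv := h2,
           continuous_toFun := tropMut_continuous i v,
           continuous_invFun := tropMut_continuous i _ }, rfl⟩
end

section
/- Let κ : ℤ satisfy κ = 1 ∨ κ = -1, and define the linear map L : (I → ℝ) → (I → ℝ) by L w j = w j + ((κ * v j : ℤ) : ℝ) * w i if j ≠ i and κ * v j ≥ 0, L w j = w j if j ≠ i and κ * v j < 0, and L w i = -(w i). Then for every w : I → ℝ with (κ : ℝ) * w i ≥ 0 one has T w = L w. -/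
variable {I : Type*} [Fintype I] [DecidableEq I]

/-- The linear map associated to the tropical sign `κ`. -/
noncomputable def linMut (i : I) (v : I → ℤ) (κ : ℤ) (w : I → ℝ) : I → ℝ := fun j =>
  if j = i then -(w i)
  else if 0 ≤ κ * v j then w j + ((κ * v j : ℤ) : ℝ) * w i
  else w j

/-- On the half-space where `κ ⬝ w i ≥ 0` the tropical mutation agrees with the
linear map `linMut`. -/
theorem tropMut_eq_linMut (i : I) (v : I → ℤ) (hvi : v i = 0)
    (κ : ℤ) (hκ : κ = 1 ∨ κ = -1)
    (w : I → ℝ) (hw : (κ : ℝ) * w i ≥ 0) :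
    tropMut i v w = linMut i v κ w := by
  funext j
  unfold tropMut linMut
  by_cases hj : j = i
  · simp [hj]
  · simp only [hj, if_false]
    rcases hκ with rfl | rfl
    · -- κ = 1, w i ≥ 0
      have hwi : 0 ≤ w i := by simpa using hw
      have h1 : max 0 (w i) = w i := max_eq_right hwi
      have h2 : max 0 (-(w i)) = 0 := max_eq_left (by linarith)
      simp only [one_mul, h1, h2]
      by_cases hv : 0 ≤ v j <;> simp [hv]
    · -- κ = -1, w i ≤ 0
      have hwi : w i ≤ 0 := by
        have : (-1 : ℝ) * w i ≥ 0 := by exact_mod_cast hw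
        linarith
      have h1 : max 0 (w i) = 0 := max_eq_left hwi
      have h2 : max 0 (-(w i)) = -(w i) := max_eq_right (by linarith)
      simp only [h1, h2]
      by_cases hv : 0 ≤ v j
      · rcases eq_or_lt_of_le hv with h0 | h0
        · simp [← h0]
        · have : ¬ 0 ≤ (-1) * v j := by omega
          simp [this, hv, h0.not_ge]
      · have : 0 ≤ (-1) * v j := by omega
        simp only [hv, if_false, this, if_true]
        push_cast
        ring
end

section
/- For all x, h : I → ℝ with h i = 0, one has T (x + h) = T x + T h. (In particular the tropical mutation T is additive along the hyperplane {w : w i = 0}.) -/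
variable {I : Type*} [Fintype I] [DecidableEq I]

/-- The tropical mutation is additive along the hyperplane `{w | w i = 0}`. -/
theorem tropMut_add_of_hyperplane (i : I) (v : I → ℤ) (hvi : v i = 0)
    (x h : I → ℝ) (hh : h i = 0) :
    tropMut i v (x + h) = tropMut i v x + tropMut i v h := by
  funext j
  simp only [tropMut, Pi.add_apply, hh, add_zero, neg_zero, max_self, mul_zero]
  split_ifs with h1 h2 <;> ring
end

section
/- Let G' be the complex cluster mutation at i associated to -v (i.e. with v replaced by j ↦ -(v j)). Then for every z : I → ℂ with z i ≠ 0 and z i ≠ -1, one has G' (G z) = z and G (G' z) = z. -/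
variable {I : Type*} [Fintype I] [DecidableEq I]

/-- The complex cluster mutation at `i` with exchange entries `v`. -/
noncomputable def cplxMut (i : I) (v : I → ℤ) (z : I → ℂ) : I → ℂ := fun j =>
  if j = i then (z i)⁻¹
  else if 0 ≤ v j then z j * (1 + z i) ^ (v j)
  else z j * (1 + (z i)⁻¹) ^ (v j)

lemma cplxMut_key (i : I) (v : I → ℤ) (z : I → ℂ) (h0 : z i ≠ 0) (h1 : z i ≠ -1) :
    cplxMut i (fun j => -(v j)) (cplxMut i v z) = z := by
  have h1' : 1 + z i ≠ 0 := by
    intro h; apply h1; linear_combination h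
  have h2' : 1 + (z i)⁻¹ ≠ 0 := by
    intro h
    apply h1'
    have := congrArg (· * z i) h
    field_simp at this
    linear_combination this
  have hwi : cplxMut i v z i = (z i)⁻¹ := by simp [cplxMut]
  funext j
  by_cases hj : j = i
  · subst hj; simp [cplxMut, inv_inv]
  · simp only [cplxMut, hwi, if_neg hj, if_true, inv_inv]
    rcases lt_trichotomy (v j) 0 with hv | hv | hv
    · rw [if_neg (not_le.2 hv), if_pos (by omega : (0:ℤ) ≤ -(v j))]
      rw [mul_assoc, ← zpow_add₀ h2']
      simp
    · simp [hv]
    · rw [if_pos hv.le, if_neg (by omega : ¬ (0:ℤ) ≤ -(v j))]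
      rw [mul_assoc, ← zpow_add₀ h1']
      simp

/-- The complex cluster mutations at `i` for `v` and `-v` are mutually inverse
wherever they are defined. -/
theorem cplxMut_inverse (i : I) (v : I → ℤ) (hvi : v i = 0)
    (z : I → ℂ) (h0 : z i ≠ 0) (h1 : z i ≠ -1) :
    cplxMut i (fun j => -(v j)) (cplxMut i v z) = z ∧
    cplxMut i v (cplxMut i (fun j => -(v j)) z) = z := by
  refine ⟨cplxMut_key i v z h0 h1, ?_⟩
  have h := cplxMut_key i (fun j => -(v j)) z h0 h1
  have hvv : (fun j => -(-(v j))) = v := by funext j; ring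
  rwa [hvv] at h
end

section
/- Let ι : (I → ℂ) → (I → ℂ) be the componentwise inversion ι z j = (z j)⁻¹, and let G' be the complex cluster mutation at i associated to -v. Then for every z : I → ℂ with z j ≠ 0 for all j and z i ≠ -1, one has ι (G (ι z)) = G' z. -/
variable {I : Type*} [Fintype I] [DecidableEq I]

/-- Conjugating the cluster mutation by componentwise inversion gives the
cluster mutation for the opposite sign data. -/
theorem cplxMut_opposite (i : I) (v : I → ℤ) (hvi : v i = 0)
    (z : I → ℂ) (h0 : ∀ j, z j ≠ 0) (h1 : z i ≠ -1) :
    (fun j => (cplxMut i v (fun k => (z k)⁻¹) j)⁻¹) =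
      cplxMut i (fun j => -(v j)) z := by
  funext j
  by_cases hj : j = i
  · simp [cplxMut, hj]
  · simp only [cplxMut, hj, if_false]
    rcases lt_trichotomy (v j) 0 with h | h | h
    · rw [if_neg (not_le.mpr h), if_pos (by omega : (0:ℤ) ≤ -v j),
        inv_inv (z i), mul_inv, inv_inv, ← zpow_neg]
    · simp [h]
    · rw [if_pos h.le, if_neg (by omega : ¬ (0:ℤ) ≤ -v j),
        mul_inv, inv_inv, ← zpow_neg]
end

section
/- Let κ : ℤ satisfy κ = 1 ∨ κ = -1, and define the monomial map Mon : (I → ℂ) → (I → ℂ) by Mon w k = w k * (w i) ^ (κ * v k) if k ≠ i and κ * v k ≥ 0, Mon w k = w k if k ≠ i and κ * v k < 0, and Mon w i = (w i)⁻¹ (integer powers zpow). Then for every z : I → ℂ with z i ≠ 0 and z i ≠ -1, and for every j ∈ I, one has Mon (G z) j = z j * (1 + (z i) ^ (-κ)) ^ (v j). -/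
variable {I : Type*} [Fintype I] [DecidableEq I]

/-- The sign-coherent monomial change of coordinates with tropical sign `κ`. -/
noncomputable def monMut (i : I) (v : I → ℤ) (κ : ℤ) (w : I → ℂ) : I → ℂ := fun k =>
  if k = i then (w i)⁻¹
  else if 0 ≤ κ * v k then w k * (w i) ^ (κ * v k)
  else w k

/-- The separation formula: composing the cluster mutation with the
sign-coherent monomial map gives `z j ↦ z j (1 + z i ^ (-κ)) ^ (v j)`. -/
theorem separation_formula (i : I) (v : I → ℤ) (hvi : v i = 0)
    (κ : ℤ) (hκ : κ = 1 ∨ κ = -1)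
    (z : I → ℂ) (h0 : z i ≠ 0) (h1 : z i ≠ -1) (j : I) :
    monMut i v κ (cplxMut i v z) j = z j * (1 + (z i) ^ (-κ)) ^ (v j) := by
  have key : (1 + (z i)⁻¹ : ℂ) = (1 + z i) * (z i)⁻¹ := by field_simp; ring
  have hcpi : cplxMut i v z i = (z i)⁻¹ := by simp [cplxMut]
  by_cases hj : j = i
  · subst hj; simp [monMut, hcpi, hvi]
  · simp only [monMut, if_neg hj]
    rw [hcpi]
    simp only [cplxMut, if_neg hj]
    rcases hκ with hκ | hκ <;> subst hκ
    · by_cases hv : (0:ℤ) ≤ v j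
      · simp only [one_mul, if_pos hv]
        rw [zpow_neg_one, key, mul_zpow, inv_zpow]
        ring
      · simp only [one_mul, if_neg hv]
        rw [zpow_neg_one]
    · rw [neg_neg, zpow_one]
      by_cases hv : (0:ℤ) ≤ -1 * v j
      · simp only [if_pos hv]
        have hv' : v j ≤ 0 := by linarith
        rcases eq_or_lt_of_le hv' with h | h
        · simp [h]
        · simp only [if_neg (not_le.mpr h)]
          rw [inv_zpow', key, mul_zpow, inv_zpow]
          have : -(-1 * v j) = v j := by ring
          rw [this, mul_assoc, mul_assoc, inv_mul_cancel₀ (zpow_ne_zero _ h0), mul_one]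
      · have hv' : (0:ℤ) ≤ v j := by nlinarith [not_le.mp hv]
        simp only [if_neg hv, if_pos hv']
end

section
/- The log mutation F is infinitely differentiable (ContDiff ℝ ⊤ F, viewing I → ℝ as a finite-dimensional real normed space), and if F' denotes the log mutation at i associated to -v (i.e. with v replaced by j ↦ -(v j)), then F' (F w) = w and F (F' w) = w for every w : I → ℝ. In particular F is a diffeomorphism of I → ℝ onto itself. -/
variable {I : Type*} [Fintype I] [DecidableEq I]

/-- The log mutation at `i` with exchange entries `v`. -/
noncomputable def logMut (i : I) (v : I → ℤ) (w : I → ℝ) : I → ℝ := fun j =>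
  if j = i then -(w i)
  else if 0 ≤ v j then w j + (v j : ℝ) * Real.log (1 + Real.exp (w i))
  else w j + (v j : ℝ) * Real.log (1 + Real.exp (-(w i)))

lemma logMut_smooth (i : I) (v : I → ℤ) : ContDiff ℝ (⊤ : ℕ∞) (logMut i v) := by
  rw [contDiff_pi]
  intro j
  have hev : ∀ k : I, ContDiff ℝ (⊤ : ℕ∞) (fun w : I → ℝ => w k) := fun k =>
    (ContinuousLinearMap.proj k : (I → ℝ) →L[ℝ] ℝ).contDiff
  have hlog : ContDiff ℝ (⊤ : ℕ∞) (fun x : ℝ => Real.log (1 + Real.exp x)) := by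
    apply ContDiff.log (contDiff_const.add Real.contDiff_exp)
    intro x
    positivity
  by_cases hj : j = i
  · simp only [logMut, if_pos hj]
    exact (hev i).neg
  · by_cases hv : 0 ≤ v j
    · simp only [logMut, if_neg hj, if_pos hv]
      exact (hev j).add (contDiff_const.mul (hlog.comp (hev i)))
    · simp only [logMut, if_neg hj, if_neg hv]
      exact (hev j).add (contDiff_const.mul (hlog.comp (hev i).neg))

lemma logMut_inv (i : I) (v : I → ℤ) (hvi : v i = 0) (w : I → ℝ) :
    logMut i (fun j => -(v j)) (logMut i v w) = w := by
  have hwi : logMut i v w i = -(w i) := by simp [logMut]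
  funext j
  by_cases hj : j = i
  · subst hj; simp [logMut]
  · rcases lt_trichotomy (v j) 0 with h | h | h
    · have h1 : ¬ 0 ≤ v j := not_le.2 h
      have h2 : (0:ℤ) ≤ -(v j) := by omega
      simp only [logMut, if_neg hj, if_neg h1, if_pos h2, hwi]
      push_cast
      ring
    · simp [logMut, hj, h, hwi]
    · have h1 : 0 ≤ v j := le_of_lt h
      have h2 : ¬ (0:ℤ) ≤ -(v j) := by omega
      simp only [logMut, if_neg hj, if_pos h1, if_neg h2, hwi, neg_neg]
      push_cast
      ring

/-- The log mutation is infinitely differentiable, the log mutations for `v`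
and `-v` are mutually inverse, and hence the log mutation is a diffeomorphism
of `I → ℝ` onto itself. -/
theorem logMut_smooth_inverse (i : I) (v : I → ℤ) (hvi : v i = 0) :
    ContDiff ℝ (⊤ : ℕ∞) (logMut i v) ∧
    (∀ w : I → ℝ, logMut i (fun j => -(v j)) (logMut i v w) = w) ∧
    (∀ w : I → ℝ, logMut i v (logMut i (fun j => -(v j)) w) = w) ∧
    ∃ e : (I → ℝ) ≃ (I → ℝ), ⇑e = logMut i v ∧
      ContDiff ℝ (⊤ : ℕ∞) ⇑e ∧ ContDiff ℝ (⊤ : ℕ∞) ⇑e.symm := by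
  have hinv2 : ∀ w : I → ℝ, logMut i v (logMut i (fun j => -(v j)) w) = w := by
    intro w
    have := logMut_inv i (fun j => -(v j)) (by simp [hvi]) w
    simpa using this
  refine ⟨logMut_smooth i v, logMut_inv i v hvi, hinv2,
    ⟨⟨logMut i v, logMut i (fun j => -(v j)), logMut_inv i v hvi, hinv2⟩, rfl,
      logMut_smooth i v, logMut_smooth i _⟩⟩
end

section
/- The log mutation F is differentiable at every point u : I → ℝ, and its Fréchet derivative is given explicitly by: (fderiv ℝ F u) h j = h j + (v j : ℝ) * h i * (1 + Real.exp (-(u i)))⁻¹ if j ≠ i and v j ≥ 0; (fderiv ℝ F u) h j = h j - (v j : ℝ) * h i * (1 + Real.exp (u i))⁻¹ if j ≠ i and v j < 0; and (fderiv ℝ F u) h i = -(h i). -/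
variable {I : Type*} [Fintype I] [DecidableEq I]

/-! Every coordinate of `logMut i v` other than the `i`-th is `w j` plus a multiple of the
softplus function `x ↦ log (1 + exp x)` evaluated at `w i` or `-(w i)`, and the derivative of
softplus is the logistic function `x ↦ (1 + exp (-x))⁻¹`. -/

open Real ContinuousLinearMap

theorem hasDerivAt_log_one_add_exp (x : ℝ) :
    HasDerivAt (fun y => log (1 + exp y)) (1 + exp (-x))⁻¹ x := by
  have h := ((hasDerivAt_exp x).const_add 1).log (by positivity)
  convert h using 1
  rw [exp_neg]
  field_simp
  ring

theorem hasDerivAt_log_one_add_exp_neg (x : ℝ) :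
    HasDerivAt (fun y => log (1 + exp (-y))) (-(1 + exp x)⁻¹) x := by
  simpa [Function.comp_def] using (hasDerivAt_log_one_add_exp (-x)).comp x (hasDerivAt_neg x)

theorem hasFDerivAt_apply_add_mul_comp_apply {ι : Type*} [Fintype ι]
    {g : ℝ → ℝ} {g' : ℝ} {u : ι → ℝ} (j i : ι) (c : ℝ) (hg : HasDerivAt g g' (u i)) :
    HasFDerivAt (fun w : ι → ℝ => w j + c * g (w i))
      (proj (R := ℝ) (φ := fun _ => ℝ) j + (c * g') • proj i) u := by
  rw [mul_smul]
  exact (hasFDerivAt_apply j u).add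
    ((hg.comp_hasFDerivAt u (hasFDerivAt_apply i u)).const_mul c)

noncomputable def logMutDeriv (i : I) (v : I → ℤ) (u : I → ℝ) : (I → ℝ) →L[ℝ] (I → ℝ) :=
  pi fun j =>
    if j = i then -proj i
    else if 0 ≤ v j then proj j + ((v j : ℝ) * (1 + exp (-(u i)))⁻¹) • proj i
    else proj j + ((v j : ℝ) * -(1 + exp (u i))⁻¹) • proj i

theorem hasFDerivAt_logMut (i : I) (v : I → ℤ) (u : I → ℝ) :
    HasFDerivAt (logMut i v) (logMutDeriv i v u) u := by
  refine hasFDerivAt_pi.2 fun j => ?_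
  unfold logMut
  split_ifs with hj
  · subst hj
    exact (hasFDerivAt_apply j u).neg
  · exact hasFDerivAt_apply_add_mul_comp_apply j i _ (hasDerivAt_log_one_add_exp _)
  · exact hasFDerivAt_apply_add_mul_comp_apply j i _ (hasDerivAt_log_one_add_exp_neg _)

theorem logMut_fderiv_general (i : I) (v : I → ℤ) (u : I → ℝ) :
    DifferentiableAt ℝ (logMut i v) u ∧
    ∀ (h : I → ℝ) (j : I),
      fderiv ℝ (logMut i v) u h j =
        if j = i then -(h i)
        else if 0 ≤ v j then h j + (v j : ℝ) * h i * (1 + Real.exp (-(u i)))⁻¹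
        else h j - (v j : ℝ) * h i * (1 + Real.exp (u i))⁻¹ := by
  refine ⟨(hasFDerivAt_logMut i v u).differentiableAt, fun h j => ?_⟩
  rw [(hasFDerivAt_logMut i v u).fderiv, logMutDeriv]
  split_ifs <;> simp [*] <;> ring

/-- The log mutation is differentiable everywhere, with explicit Fréchet
derivative. -/
theorem logMut_fderiv (i : I) (v : I → ℤ) (hvi : v i = 0) (u : I → ℝ) :
    DifferentiableAt ℝ (logMut i v) u ∧
    ∀ (h : I → ℝ) (j : I),
      fderiv ℝ (logMut i v) u h j =
        if j = i then -(h i)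
        else if 0 ≤ v j then h j + (v j : ℝ) * h i * (1 + Real.exp (-(u i)))⁻¹
        else h j - (v j : ℝ) * h i * (1 + Real.exp (u i))⁻¹ :=
  logMut_fderiv_general i v u
end

section
/- For all u, y : I → ℝ with y i = 0, and for every j ∈ I, one has Complex.exp (↑(F u j) + Complex.I * ↑(T y j)) = G (fun k => Complex.exp (↑(u k) + Complex.I * ↑(y k))) j. -/
variable {I : Type*} [Fintype I] [DecidableEq I]

lemma exp_log_aux (x : ℝ) (n : ℤ) :
    Complex.exp ((n : ℂ) * (Real.log (1 + Real.exp x) : ℂ)) =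
      ((1 : ℂ) + (Real.exp x : ℂ)) ^ n := by
  rw [Complex.exp_int_mul]
  congr 1
  have hpos : (0:ℝ) < 1 + Real.exp x := by positivity
  rw [← Complex.ofReal_exp, Real.exp_log hpos]
  push_cast
  ring

/-- The gluing identity for the exponential map on the log cluster space. -/
theorem exp_logMut_tropMut_glue (i : I) (v : I → ℤ) (hvi : v i = 0)
    (u y : I → ℝ) (hy : y i = 0) (j : I) :
    Complex.exp ((logMut i v u j : ℂ) + Complex.I * (tropMut i v y j : ℂ)) =
      cplxMut i v (fun k => Complex.exp ((u k : ℂ) + Complex.I * (y k : ℂ))) j := by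
  simp only [logMut, tropMut, cplxMut]
  by_cases hj : j = i
  · simp [hj, hy, ← Complex.exp_neg]
  · by_cases hv : 0 ≤ v j
    · simp only [hj, if_false, hv, if_true, hy, max_self, mul_zero, add_zero, neg_zero]
      push_cast
      rw [show (u j : ℂ) + (v j : ℂ) * (Real.log (1 + Real.exp (u i)) : ℂ) +
            Complex.I * (y j : ℂ) =
          ((u j : ℂ) + Complex.I * (y j : ℂ)) +
            (v j : ℂ) * (Real.log (1 + Real.exp (u i)) : ℂ) by ring,
        Complex.exp_add, exp_log_aux]
      congr 2
      rw [Complex.exp_add, ← Complex.ofReal_exp]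
      simp [hy]
    · simp only [hj, if_false, hv, if_true, hy, max_self, mul_zero, add_zero, neg_zero]
      push_cast
      rw [show (u j : ℂ) + (v j : ℂ) * (Real.log (1 + Real.exp (-(u i))) : ℂ) +
            Complex.I * (y j : ℂ) =
          ((u j : ℂ) + Complex.I * (y j : ℂ)) +
            (v j : ℂ) * (Real.log (1 + Real.exp (-(u i))) : ℂ) by ring,
        Complex.exp_add, exp_log_aux]
      congr 2
      push_cast [Complex.ofReal_exp]
      rw [Complex.exp_neg]
      norm_num
end

section
/- For u, y : I → ℝ define u' = F u and y' : I → ℝ by y' j = y j + (v j : ℝ) * y i * (1 + Real.exp (-(u i)))⁻¹ if j ≠ i and v j ≥ 0, y' j = y j - (v j : ℝ) * y i * (1 + Real.exp (u i))⁻¹ if j ≠ i and v j < 0, and y' i = -(y i). Then for all u, y : I → ℝ with y i = 0 and every j ∈ I, one has Complex.exp (↑(u' j) + Complex.I * ↑(y' j)) = G (fun k => Complex.exp (↑(u k) + Complex.I * ↑(y k))) j. -/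
variable {I : Type*} [Fintype I] [DecidableEq I]

/-- The derivative (tangent-bundle) transition of the log mutation at the
point `u`, applied to the tangent vector `y`. -/
noncomputable def tangMut (i : I) (v : I → ℤ) (u y : I → ℝ) : I → ℝ := fun j =>
  if j = i then -(y i)
  else if 0 ≤ v j then y j + (v j : ℝ) * y i * (1 + Real.exp (-(u i)))⁻¹
  else y j - (v j : ℝ) * y i * (1 + Real.exp (u i))⁻¹

lemma aux_zpow (r : ℝ) (hr : 0 < r) (n : ℤ) :
    (r : ℂ) ^ n = Complex.exp ((n : ℂ) * (Real.log r : ℂ)) := by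
  rw [← Complex.ofReal_zpow, ← Complex.ofReal_intCast, ← Complex.ofReal_mul,
    ← Real.log_zpow, ← Complex.ofReal_exp, Real.exp_log (zpow_pos hr n)]

lemma aux_exp_log (u : ℝ) (n : ℤ) :
    Complex.exp ((n : ℂ) * (Real.log (1 + Real.exp u) : ℂ)) =
      (1 + Complex.exp (u : ℂ)) ^ n := by
  rw [← Complex.ofReal_exp, ← Complex.ofReal_one, ← Complex.ofReal_add,
    aux_zpow _ (by positivity)]

/-- The gluing identity for the exponential map on the tangent bundle of the
positive real cluster space. -/
theorem exp_logMut_tangMut_glue (i : I) (v : I → ℤ) (hvi : v i = 0)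
    (u y : I → ℝ) (hy : y i = 0) (j : I) :
    Complex.exp ((logMut i v u j : ℂ) + Complex.I * (tangMut i v u y j : ℂ)) =
      cplxMut i v (fun k => Complex.exp ((u k : ℂ) + Complex.I * (y k : ℂ))) j := by
  simp only [logMut, tangMut, cplxMut]
  by_cases hj : j = i
  · subst hj
    simp [hy, Complex.exp_neg]
  · simp only [hj, if_false]
    by_cases hv : 0 ≤ v j
    · simp only [hv, if_true]
      have h1 : ((u j + (v j : ℝ) * Real.log (1 + Real.exp (u i)) : ℝ) : ℂ) +
          Complex.I * ((y j + (v j : ℝ) * y i * (1 + Real.exp (-(u i)))⁻¹ : ℝ) : ℂ) =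
          ((u j : ℂ) + Complex.I * (y j : ℂ)) +
            ((v j : ℤ) : ℂ) * ((Real.log (1 + Real.exp (u i)) : ℝ) : ℂ) := by
        push_cast [hy]; ring
      rw [h1, Complex.exp_add, aux_exp_log, hy]
      simp
    · simp only [hv, if_false]
      have h1 : ((u j + (v j : ℝ) * Real.log (1 + Real.exp (-(u i))) : ℝ) : ℂ) +
          Complex.I * ((y j - (v j : ℝ) * y i * (1 + Real.exp (u i))⁻¹ : ℝ) : ℂ) =
          ((u j : ℂ) + Complex.I * (y j : ℂ)) +
            ((v j : ℤ) : ℂ) * ((Real.log (1 + Real.exp (-(u i))) : ℝ) : ℂ) := by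
        push_cast [hy]; ring
      rw [h1, Complex.exp_add, aux_exp_log, hy]
      simp [← Complex.exp_neg]
end
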